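/- Let G₁, G₂ be graphs of orders n₁, n₂ with minimum degrees δ₁, δ₂, and let k_i > −δ_i for i ∈ {1,2}. Then for every k ≥ k₁ + k₂ − 1, φ_k^p(G₁ □ G₂) ≥ φ_{k₁}^p(G₁)·φ_{k₂}^p(G₂) + min{n₁ − φ_{k₁}^p(G₁), n₂ − φ_{k₂}^p(G₂)}, where φ_k^p(G) is the maximum cardinality of a powerful k-alliance free set in G. -/

import Mathlib

/-!
Take maximum powerful alliance free sets `X₁ ⊆ V₁`, `X₂ ⊆ V₂` and a partial matching
`Δ ⊆ X₁ᶜ × X₂ᶜ` (no two points in a common row or column) of size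
`min (n₁ - |X₁|) (n₂ - |X₂|)`; then `X₁ × X₂ ∪ Δ` is powerful `k`-alliance free.
The margin `δ_S(v) - δ_{S̄}(v)` of a vertex of `G₁ □ G₂` is the sum of the margins of its row and
column fibers. Let `S ⊆ X₁ × X₂ ∪ Δ` be a powerful `k`-alliance. A point of `S ∩ Δ` has no
neighbor in `S`, so its margin is at most `-δ₁ - δ₂ < k`; hence `S ⊆ X₁ × X₂`. The projection `P`
of `S` to `V₂` inherits the offensive condition from `S`, so it is not a defensive `k₂`-alliance
and some `b ∈ P` has margin `< k₂` in `P`. Subtracting that margin, the fiber of `S` over `b` is a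
powerful `k₁`-alliance inside `X₁`, a contradiction.
-/

open Classical

/-- Number of neighbors of `v` inside `S`. -/
noncomputable def dS {V : Type*} (G : SimpleGraph V) (S : Set V) (v : V) : ℕ :=
  {u ∈ S | G.Adj v u}.ncard

/-- `S` is a defensive `k`-alliance. -/
def IsDefAlliance {V : Type*} (G : SimpleGraph V) (k : ℤ) (S : Set V) : Prop :=
  S.Nonempty ∧ ∀ v ∈ S, (dS G S v : ℤ) ≥ (dS G Sᶜ v : ℤ) + k

/-- `X` is a defensive `k`-alliance free set. -/
def IsDafFree {V : Type*} (G : SimpleGraph V) (k : ℤ) (X : Set V) : Prop :=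
  ∀ S : Set V, S ⊆ X → ¬ IsDefAlliance G k S

/-- Boundary: vertices outside `S` with a neighbor in `S`. -/
def obdry {V : Type*} (G : SimpleGraph V) (S : Set V) : Set V :=
  {v | v ∉ S ∧ ∃ u ∈ S, G.Adj v u}

/-- `S` is an offensive `k`-alliance. -/
def IsOffAlliance {V : Type*} (G : SimpleGraph V) (k : ℤ) (S : Set V) : Prop :=
  S.Nonempty ∧ ∀ v ∈ obdry G S, (dS G S v : ℤ) ≥ (dS G Sᶜ v : ℤ) + k

/-- `X` is an offensive `k`-alliance free set. -/
def IsOafFree {V : Type*} (G : SimpleGraph V) (k : ℤ) (X : Set V) : Prop :=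
  ∀ S : Set V, S ⊆ X → ¬ IsOffAlliance G k S

/-- `S` is a powerful `k`-alliance. -/
def IsPowAlliance {V : Type*} (G : SimpleGraph V) (k : ℤ) (S : Set V) : Prop :=
  IsDefAlliance G k S ∧ IsOffAlliance G (k + 2) S

/-- `X` is a powerful `k`-alliance free set. -/
def IsPafFree {V : Type*} (G : SimpleGraph V) (k : ℤ) (X : Set V) : Prop :=
  ∀ S : Set V, S ⊆ X → ¬ IsPowAlliance G k S

/-- Maximum cardinality of a defensive `k`-alliance free set. -/
noncomputable def phiD {V : Type*} (G : SimpleGraph V) (k : ℤ) : ℕ :=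
  sSup {n : ℕ | ∃ X : Set V, IsDafFree G k X ∧ X.ncard = n}

/-- Maximum cardinality of an offensive `k`-alliance free set. -/
noncomputable def phiO {V : Type*} (G : SimpleGraph V) (k : ℤ) : ℕ :=
  sSup {n : ℕ | ∃ X : Set V, IsOafFree G k X ∧ X.ncard = n}

/-- Maximum cardinality of a powerful `k`-alliance free set. -/
noncomputable def phiP {V : Type*} (G : SimpleGraph V) (k : ℤ) : ℕ :=
  sSup {n : ℕ | ∃ X : Set V, IsPafFree G k X ∧ X.ncard = n}

section Margin

variable {V : Type*} (G : SimpleGraph V)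

noncomputable def margin (S : Set V) (v : V) : ℤ :=
  dS G S v - dS G Sᶜ v

lemma isDefAlliance_iff {k : ℤ} {S : Set V} :
    IsDefAlliance G k S ↔ S.Nonempty ∧ ∀ v ∈ S, k ≤ margin G S v := by
  simp only [IsDefAlliance, margin, ge_iff_le, le_sub_iff_add_le', Int.add_comm]

lemma isOffAlliance_iff {k : ℤ} {S : Set V} :
    IsOffAlliance G k S ↔ S.Nonempty ∧ ∀ v ∈ obdry G S, k ≤ margin G S v := by
  simp only [IsOffAlliance, margin, ge_iff_le, le_sub_iff_add_le', Int.add_comm]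

variable {G}

lemma IsDefAlliance.mono {k k' : ℤ} {S : Set V} (h : IsDefAlliance G k S) (hk : k' ≤ k) :
    IsDefAlliance G k' S := by
  rw [isDefAlliance_iff] at h ⊢
  exact ⟨h.1, fun v hv => hk.trans (h.2 v hv)⟩

lemma IsOffAlliance.mono {k k' : ℤ} {S : Set V} (h : IsOffAlliance G k S) (hk : k' ≤ k) :
    IsOffAlliance G k' S := by
  rw [isOffAlliance_iff] at h ⊢
  exact ⟨h.1, fun v hv => hk.trans (h.2 v hv)⟩

lemma dS_mono [Finite V] {S T : Set V} (h : S ⊆ T) (v : V) : dS G S v ≤ dS G T v :=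
  Set.ncard_le_ncard (fun _ hu => ⟨h hu.1, hu.2⟩)

lemma margin_mono [Finite V] {S T : Set V} (h : S ⊆ T) (v : V) :
    margin G S v ≤ margin G T v := by
  have := dS_mono (G := G) h v
  have := dS_mono (G := G) (Set.compl_subset_compl.mpr h) v
  unfold margin
  omega

lemma dS_add_dS_compl [Fintype V] [DecidableRel G.Adj] (S : Set V) (v : V) :
    dS G S v + dS G Sᶜ v = G.degree v := by
  rw [← G.card_neighborSet_eq_degree, ← Nat.card_eq_fintype_card, Nat.card_coe_set_eq, dS, dS,
    ← Set.ncard_union_eq]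
  · congr 1
    ext u
    by_cases hu : u ∈ S <;> simp [hu]
  · exact Set.disjoint_left.mpr fun _ hu hu' => hu'.1 hu.1

lemma margin_eq_neg_degree [Fintype V] [DecidableRel G.Adj] {S : Set V} {v : V}
    (h : ∀ u ∈ S, ¬ G.Adj v u) : margin G S v = -G.degree v := by
  have hS : dS G S v = 0 := by
    rw [dS, Set.ncard_eq_zero]
    exact Set.eq_empty_of_forall_notMem fun u hu => h u hu.1 hu.2
  have := dS_add_dS_compl (G := G) S v
  unfold margin
  omega

lemma margin_le_neg_minDegree [Fintype V] [DecidableRel G.Adj] {S : Set V} {v : V}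
    (h : ∀ u ∈ S, ¬ G.Adj v u) : margin G S v ≤ -G.minDegree := by
  rw [margin_eq_neg_degree h]
  exact neg_le_neg (mod_cast G.minDegree_le_degree v)

end Margin

section BoxProd

variable {V₁ V₂ : Type*} {G₁ : SimpleGraph V₁} {G₂ : SimpleGraph V₂}

lemma dS_boxProd [Finite V₁] [Finite V₂] (S : Set (V₁ × V₂)) (a : V₁) (b : V₂) :
    dS (G₁ □ G₂) S (a, b) = dS G₁ ((·, b) ⁻¹' S) a + dS G₂ (Prod.mk a ⁻¹' S) b := by
  have hsplit : {u ∈ S | (G₁ □ G₂).Adj (a, b) u} =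
      (·, b) '' {a' ∈ (·, b) ⁻¹' S | G₁.Adj a a'} ∪
        Prod.mk a '' {b' ∈ Prod.mk a ⁻¹' S | G₂.Adj b b'} := by
    ext ⟨x, y⟩
    simp only [SimpleGraph.boxProd_adj, Set.mem_union, Set.mem_image, Set.mem_preimage,
      Set.mem_ofPred_eq, Prod.mk.injEq]
    constructor
    · rintro ⟨hS, ⟨hadj, rfl⟩ | ⟨hadj, rfl⟩⟩
      exacts [Or.inl ⟨x, ⟨hS, hadj⟩, rfl, rfl⟩, Or.inr ⟨y, ⟨hS, hadj⟩, rfl, rfl⟩]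
    · rintro (⟨x, ⟨hS, hadj⟩, rfl, rfl⟩ | ⟨y, ⟨hS, hadj⟩, rfl, rfl⟩)
      exacts [⟨hS, Or.inl ⟨hadj, rfl⟩⟩, ⟨hS, Or.inr ⟨hadj, rfl⟩⟩]
  have hdisj : Disjoint ((·, b) '' {a' ∈ (·, b) ⁻¹' S | G₁.Adj a a'})
      (Prod.mk a '' {b' ∈ Prod.mk a ⁻¹' S | G₂.Adj b b'}) := by
    refine Set.disjoint_left.mpr ?_
    rintro _ ⟨x, ⟨-, hadj⟩, rfl⟩ ⟨y, -, hxy⟩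
    exact G₁.ne_of_adj hadj (congrArg Prod.fst hxy)
  rw [dS, hsplit, Set.ncard_union_eq hdisj,
    Set.ncard_image_of_injective _ (Prod.mk_left_injective b),
    Set.ncard_image_of_injective _ (Prod.mk_right_injective a)]
  rfl

lemma margin_boxProd [Finite V₁] [Finite V₂] (S : Set (V₁ × V₂)) (a : V₁) (b : V₂) :
    margin (G₁ □ G₂) S (a, b) =
      margin G₁ ((·, b) ⁻¹' S) a + margin G₂ (Prod.mk a ⁻¹' S) b := by
  simp only [margin, dS_boxProd, Set.preimage_compl]
  push_cast
  ring

lemma nonempty_fiber_of_mem_image_snd {S : Set (V₁ × V₂)} {b : V₂} (hb : b ∈ Prod.snd '' S) :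
    ((·, b) ⁻¹' S).Nonempty := by
  obtain ⟨⟨a, _⟩, ha, rfl⟩ := hb
  exact ⟨a, ha⟩

lemma margin_fiber_le [Finite V₂] {S : Set (V₁ × V₂)} (a : V₁) (b : V₂) :
    margin G₂ (Prod.mk a ⁻¹' S) b ≤ margin G₂ (Prod.snd '' S) b :=
  margin_mono (by rintro b' hb'; exact ⟨_, hb', rfl⟩) b

lemma IsDefAlliance.fiber [Finite V₁] [Finite V₂] {k : ℤ} {S : Set (V₁ × V₂)}
    (hS : IsDefAlliance (G₁ □ G₂) k S) {b : V₂} (hb : b ∈ Prod.snd '' S) :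
    IsDefAlliance G₁ (k - margin G₂ (Prod.snd '' S) b) ((·, b) ⁻¹' S) := by
  rw [isDefAlliance_iff] at hS ⊢
  refine ⟨nonempty_fiber_of_mem_image_snd hb, fun a ha => ?_⟩
  have h := hS.2 (a, b) ha
  rw [margin_boxProd] at h
  linarith [margin_fiber_le (G₂ := G₂) (S := S) a b]

lemma IsOffAlliance.fiber [Finite V₁] [Finite V₂] {k : ℤ} {S : Set (V₁ × V₂)}
    (hS : IsOffAlliance (G₁ □ G₂) k S) {b : V₂} (hb : b ∈ Prod.snd '' S) :
    IsOffAlliance G₁ (k - margin G₂ (Prod.snd '' S) b) ((·, b) ⁻¹' S) := by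
  rw [isOffAlliance_iff] at hS ⊢
  refine ⟨nonempty_fiber_of_mem_image_snd hb, ?_⟩
  rintro a ⟨ha, u, hu, hadj⟩
  have h := hS.2 (a, b) ⟨ha, (u, b), hu, SimpleGraph.boxProd_adj.mpr (Or.inl ⟨hadj, rfl⟩)⟩
  rw [margin_boxProd] at h
  linarith [margin_fiber_le (G₂ := G₂) (S := S) a b]

lemma IsOffAlliance.image_snd [Fintype V₁] [DecidableRel G₁.Adj] [Finite V₂] {k : ℤ}
    {S : Set (V₁ × V₂)} (hS : IsOffAlliance (G₁ □ G₂) k S) :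
    IsOffAlliance G₂ (k + G₁.minDegree) (Prod.snd '' S) := by
  rw [isOffAlliance_iff] at hS ⊢
  refine ⟨hS.1.image _, ?_⟩
  rintro b' ⟨hb', b, ⟨⟨a, _⟩, hab, rfl⟩, hadj⟩
  have hbd : (a, b') ∈ obdry (G₁ □ G₂) S :=
    ⟨fun h => hb' ⟨_, h, rfl⟩, _, hab, SimpleGraph.boxProd_adj.mpr (Or.inr ⟨hadj, rfl⟩)⟩
  have h := hS.2 _ hbd
  have hrow : margin G₁ ((·, b') ⁻¹' S) a ≤ -G₁.minDegree :=
    margin_le_neg_minDegree fun a' ha' _ => hb' ⟨_, ha', rfl⟩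
  rw [margin_boxProd] at h
  linarith [margin_fiber_le (G₂ := G₂) (S := S) a b']


lemma IsDefAlliance.subset_prod_of_subset_union [Fintype V₁] [Fintype V₂]
    [DecidableRel G₁.Adj] [DecidableRel G₂.Adj] {k : ℤ} {S : Set (V₁ × V₂)}
    (hS : IsDefAlliance (G₁ □ G₂) k S) (hk : -((G₁.minDegree : ℤ) + G₂.minDegree) < k)
    {X₁ : Set V₁} {X₂ : Set V₂} {Δ : Set (V₁ × V₂)} (hΔ : Δ ⊆ X₁ᶜ ×ˢ X₂ᶜ)
    (hfst : Set.InjOn Prod.fst Δ) (hsnd : Set.InjOn Prod.snd Δ) (hSX : S ⊆ X₁ ×ˢ X₂ ∪ Δ) :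
    S ⊆ X₁ ×ˢ X₂ := by
  rintro ⟨a, b⟩ hp
  refine (hSX hp).resolve_right fun hpΔ => ?_
  have hrow : ∀ a' ∈ (·, b) ⁻¹' S, ¬ G₁.Adj a a' := by
    intro a' ha' hadj
    have ha'Δ : (a', b) ∈ Δ := (hSX ha').resolve_left fun h => (hΔ hpΔ).2 h.2
    exact G₁.ne_of_adj hadj (congrArg Prod.fst (hsnd hpΔ ha'Δ rfl))
  have hcol : ∀ b' ∈ Prod.mk a ⁻¹' S, ¬ G₂.Adj b b' := by
    intro b' hb' hadj
    have hb'Δ : (a, b') ∈ Δ := (hSX hb').resolve_left fun h => (hΔ hpΔ).1 h.1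
    exact G₂.ne_of_adj hadj (congrArg Prod.snd (hfst hpΔ hb'Δ rfl))
  have h := ((isDefAlliance_iff _).1 hS).2 _ hp
  rw [margin_boxProd] at h
  linarith [margin_le_neg_minDegree hrow, margin_le_neg_minDegree hcol]

lemma IsPafFree.prod [Fintype V₁] [DecidableRel G₁.Adj] [Finite V₂] {k₁ k₂ k : ℤ}
    {X₁ : Set V₁} {X₂ : Set V₂} (hX₁ : IsPafFree G₁ k₁ X₁) (hX₂ : IsPafFree G₂ k₂ X₂)
    (hk₁ : -(G₁.minDegree : ℤ) < k₁) (hk : k₁ + k₂ - 1 ≤ k) :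
    IsPafFree (G₁ □ G₂) k (X₁ ×ˢ X₂) := by
  rintro S hS ⟨hdef, hoff⟩
  have hPoff : IsOffAlliance G₂ (k₂ + 2) (Prod.snd '' S) := hoff.image_snd.mono (by omega)
  obtain ⟨b, hb, hmargin⟩ : ∃ b ∈ Prod.snd '' S, margin G₂ (Prod.snd '' S) b < k₂ := by
    by_contra! h
    refine hX₂ _ ?_ ⟨(isDefAlliance_iff _).2 ⟨hoff.1.image _, h⟩, hPoff⟩
    rintro _ ⟨p, hp, rfl⟩
    exact (hS hp).2
  exact hX₁ _ (fun a ha => (hS ha).1)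
    ⟨(hdef.fiber hb).mono (by omega), (hoff.fiber hb).mono (by omega)⟩

end BoxProd

lemma Set.exists_subset_prod_injOn_fst_snd {α β : Type*} {A : Set α} {B : Set β}
    (hA : A.Finite) (hB : B.Finite) :
    ∃ Δ ⊆ A ×ˢ B, Set.InjOn Prod.fst Δ ∧ Set.InjOn Prod.snd Δ ∧
      Δ.ncard = min A.ncard B.ncard := by
  obtain rfl | hBne := B.eq_empty_or_nonempty
  · exact ⟨∅, Set.empty_subset _, Set.injOn_empty _, Set.injOn_empty _, by simp⟩
  have : Nonempty β := hBne.to_type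
  obtain ⟨s, hsA, hs⟩ := Set.exists_subset_card_eq (min_le_left A.ncard B.ncard)
  have hsB : s.encard ≤ B.encard := by
    rw [← (hA.subset hsA).cast_ncard_eq, ← hB.cast_ncard_eq, hs]
    exact_mod_cast min_le_right _ _
  obtain ⟨f, hfB, hf⟩ := (hA.subset hsA).exists_injOn_of_encard_le hsB
  refine ⟨s.graphOn f, ?_, Set.fst_injOn_graph, ?_, by rw [Set.ncard_graphOn, hs]⟩
  · rintro _ ⟨a, ha, rfl⟩
    exact ⟨hsA ha, hfB ha⟩
  · rintro _ ⟨a, ha, rfl⟩ _ ⟨a', ha', rfl⟩ h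
    rw [hf ha ha' h]

section Maximum

variable {V : Type*} [Finite V] {G : SimpleGraph V} {k : ℤ}

lemma bddAbove_pafFree_ncard :
    BddAbove {n : ℕ | ∃ X : Set V, IsPafFree G k X ∧ X.ncard = n} :=
  ⟨Nat.card V, by rintro _ ⟨X, -, rfl⟩; exact Set.ncard_le_card X⟩

lemma IsPafFree.ncard_le_phiP {X : Set V} (hX : IsPafFree G k X) : X.ncard ≤ phiP G k :=
  le_csSup bddAbove_pafFree_ncard ⟨X, hX, rfl⟩

variable (G k) in
lemma exists_isPafFree_ncard_eq_phiP : ∃ X : Set V, IsPafFree G k X ∧ X.ncard = phiP G k := by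
  have hempty : IsPafFree G k ∅ := fun _ hS hpow =>
    hpow.1.1.ne_empty (Set.subset_empty_iff.mp hS)
  exact Nat.sSup_mem (s := {n | ∃ X : Set V, IsPafFree G k X ∧ X.ncard = n})
    ⟨0, ∅, hempty, Set.ncard_empty V⟩ bddAbove_pafFree_ncard

end Maximum

theorem stmt19_general {V₁ V₂ : Type*} [Fintype V₁] [Fintype V₂]
    (G₁ : SimpleGraph V₁) (G₂ : SimpleGraph V₂)
    [DecidableRel G₁.Adj] [DecidableRel G₂.Adj]
    (k₁ k₂ k : ℤ)
    (hk₁ : -(G₁.minDegree : ℤ) < k₁) (hk₂ : -(G₂.minDegree : ℤ) < k₂)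
    (hk : k₁ + k₂ - 1 ≤ k) :
    phiP (G₁.boxProd G₂) k ≥
      phiP G₁ k₁ * phiP G₂ k₂ +
        min (Fintype.card V₁ - phiP G₁ k₁) (Fintype.card V₂ - phiP G₂ k₂) := by
  obtain ⟨X₁, hX₁, hcard₁⟩ := exists_isPafFree_ncard_eq_phiP G₁ k₁
  obtain ⟨X₂, hX₂, hcard₂⟩ := exists_isPafFree_ncard_eq_phiP G₂ k₂
  obtain ⟨Δ, hΔ, hfst, hsnd, hcardΔ⟩ :=
    Set.exists_subset_prod_injOn_fst_snd X₁ᶜ.toFinite X₂ᶜ.toFinite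
  have hfree : IsPafFree (G₁ □ G₂) k (X₁ ×ˢ X₂ ∪ Δ) := fun S hS hpow =>
    hX₁.prod hX₂ hk₁ hk S (hpow.1.subset_prod_of_subset_union (by omega) hΔ hfst hsnd hS) hpow
  have hdisj : Disjoint (X₁ ×ˢ X₂) Δ :=
    Set.disjoint_left.mpr fun _ hp hpΔ => (hΔ hpΔ).1 hp.1
  calc phiP G₁ k₁ * phiP G₂ k₂ +
        min (Fintype.card V₁ - phiP G₁ k₁) (Fintype.card V₂ - phiP G₂ k₂)
      = (X₁ ×ˢ X₂ ∪ Δ).ncard := by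
        rw [Set.ncard_union_eq hdisj, Set.ncard_prod, hcardΔ, Set.ncard_compl, Set.ncard_compl,
          hcard₁, hcard₂, Nat.card_eq_fintype_card, Nat.card_eq_fintype_card]
    _ ≤ phiP (G₁ □ G₂) k := hfree.ncard_le_phiP

theorem stmt19 {V₁ V₂ : Type*} [Fintype V₁] [Fintype V₂] [Nonempty V₁] [Nonempty V₂]
    (G₁ : SimpleGraph V₁) (G₂ : SimpleGraph V₂)
    [DecidableRel G₁.Adj] [DecidableRel G₂.Adj]
    (k₁ k₂ k : ℤ)
    (hk₁ : -(G₁.minDegree : ℤ) < k₁) (hk₂ : -(G₂.minDegree : ℤ) < k₂)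
    (hk : k₁ + k₂ - 1 ≤ k) :
    phiP (G₁.boxProd G₂) k ≥
      phiP G₁ k₁ * phiP G₂ k₂ +
        min (Fintype.card V₁ - phiP G₁ k₁) (Fintype.card V₂ - phiP G₂ k₂) :=
  stmt19_general G₁ G₂ k₁ k₂ k hk₁ hk₂ hk
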